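/- For all constants C0, C1, C2 ≥ 1 and L > 0 there exists a constant D = D(C0, C1, C2, L) with the following property. Let M be a nonempty finite set endowed with two metrics d0 and d1 and let r : M → (0,∞) satisfy, for all x,y ∈ M, |d0(x,y) − d1(x,y)| ≤ r(x) + r(y), |r(x) − r(y)| ≤ d0(x,y) + d1(x,y), and additionally |r(x) − r(y)| ≤ L·min{d0(x,y), d1(x,y)}. Define h(x,y) = min{d0(x,y), d1(x,y)} and, for i = 0,1, g_i(x,y) = min{d_i(x,y), r(x) + r(y)}. If c1(M, g_0) ≤ C0, c1(M, g_1) ≤ C1, and c1(M, h) ≤ C2, then the generalized twisted union (M × {0,1}, d) of (M,d0) and (M,d1) with joining function r embeds into L1 with distortion at most D. -/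

import Mathlib

open MeasureTheory

/-- `d` is a metric on `M`. -/
def IsMetric {M : Type*} (d : M → M → ℝ) : Prop :=
  (∀ x, d x x = 0) ∧ (∀ x y, x ≠ y → 0 < d x y) ∧
  (∀ x y, d x y = d y x) ∧ (∀ x y z, d x z ≤ d x y + d y z)

/-- `(M, f)` embeds into (some) `L₁` with distortion at most `K`, in the
generalized sense allowing `f` to be an arbitrary nonnegative function. -/
def EmbedsL1 {M : Type*} (f : M → M → ℝ) (K : ℝ) : Prop :=
  ∃ (Ω : Type) (_ : MeasurableSpace Ω) (μ : Measure Ω) (Ψ : M → Lp ℝ 1 μ),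
    ∀ x y, f x y ≤ ‖Ψ x - Ψ y‖ ∧ ‖Ψ x - Ψ y‖ ≤ K * f x y

/-- The metric of the (generalized) twisted union of `(M, d0)` and `(M, d1)`
with joining function `r`, realized on `M × Bool` (`false` plays the role of
`0` and `true` the role of `1`). -/
noncomputable def twistedDist {M : Type*} (d0 d1 : M → M → ℝ) (r : M → ℝ) :
    M × Bool → M × Bool → ℝ
  | (x, false), (y, false) => d0 x y
  | (x, true),  (y, true)  => d1 x y
  | (x, false), (y, true)  => ⨅ z : M, d0 x z + d1 z y + r z
  | (x, true),  (y, false) => ⨅ z : M, d0 y z + d1 z x + r z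

/-!
Fix a point `o` where `r` is minimal and L¹ distances `ρh, ρ0, ρ1` approximating `h, g0, g1`.
Map `(x, 0)` to `(x, x, o, r x, 0)` and `(x, 1)` to `(x, o, x, 0, r x)`, and measure the five
coordinates with `ρh, ρ0, ρ1, |·|, |·|`; an ℓ₁-sum of L¹ distances is again an L¹ distance.
Inside a copy this distance is `h + g_i + |r x - r y|`, which is comparable to `d_i` because
`d_i ≤ g_i + h` and `r` is `L`-Lipschitz. Across the copies it is
`h(x, y) + g0(x, o) + g1(o, y) + r x + r y`, which dominates the twisted distance since that is
at most `h + r x + r y`. Conversely `g0(x, o) ≤ 2 r x` and `g1(o, y) ≤ 2 r y` as `r o` is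
minimal, and for the length `s = d0 x z + d1 z y + r z` of any path jumping between the copies
at `z` the Lipschitz condition gives `r x, r y ≤ (L + 1) s`, while `h(x, y) ≤ s + r y`.
-/

theorem measurableEmbedding_inl {α β : Type*} [MeasurableSpace α] [MeasurableSpace β] :
    MeasurableEmbedding (Sum.inl : α → α ⊕ β) :=
  ⟨Sum.inl_injective, measurable_inl, fun _ hs => hs.inl_image⟩

theorem measurableEmbedding_inr {α β : Type*} [MeasurableSpace α] [MeasurableSpace β] :
    MeasurableEmbedding (Sum.inr : β → α ⊕ β) :=
  ⟨Sum.inr_injective, measurable_inr, fun _ hs => hs.inr_image⟩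

namespace MeasureTheory

variable {α β : Type*} [MeasurableSpace α] [MeasurableSpace β] {μ : Measure α} {ν : Measure β}

theorem eLpNorm_one_sumElim (f : α → ℝ) (g : β → ℝ) :
    eLpNorm (Sum.elim f g) 1 (μ.map Sum.inl + ν.map Sum.inr) = eLpNorm f 1 μ + eLpNorm g 1 ν := by
  rw [eLpNorm_one_add_measure, measurableEmbedding_inl.eLpNorm_map_measure,
    measurableEmbedding_inr.eLpNorm_map_measure, Sum.elim_comp_inl, Sum.elim_comp_inr]

theorem Lp.memLp_sumElim (f : Lp ℝ 1 μ) (g : Lp ℝ 1 ν) :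
    MemLp (Sum.elim f g) 1 (μ.map Sum.inl + ν.map Sum.inr) :=
  ⟨((Lp.stronglyMeasurable f).measurable.sumElim
      (Lp.stronglyMeasurable g).measurable).aestronglyMeasurable, by
    rw [eLpNorm_one_sumElim]
    exact ENNReal.add_lt_top.2 ⟨Lp.eLpNorm_lt_top f, Lp.eLpNorm_lt_top g⟩⟩

theorem Lp.dist_toLp_sumElim (f f' : Lp ℝ 1 μ) (g g' : Lp ℝ 1 ν) :
    dist ((Lp.memLp_sumElim f g).toLp _) ((Lp.memLp_sumElim f' g').toLp _) =
      dist f f' + dist g g' := by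
  rw [Lp.dist_def, eLpNorm_congr_ae (((Lp.memLp_sumElim f g).coeFn_toLp).sub
      (Lp.memLp_sumElim f' g').coeFn_toLp), ← Sum.elim_sub_sub, eLpNorm_one_sumElim,
    ENNReal.toReal_add, ← Lp.dist_def, ← Lp.dist_def]
  all_goals exact ((Lp.memLp _).sub (Lp.memLp _)).eLpNorm_ne_top

end MeasureTheory

def IsL1Distance {X : Type*} (ρ : X → X → ℝ) : Prop :=
  ∃ (Ω : Type) (_ : MeasurableSpace Ω) (μ : Measure Ω) (Ψ : X → Lp ℝ 1 μ),
    ∀ x y, dist (Ψ x) (Ψ y) = ρ x y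

theorem embedsL1_iff {X : Type*} {f : X → X → ℝ} {K : ℝ} :
    EmbedsL1 f K ↔ ∃ ρ, IsL1Distance ρ ∧ ∀ x y, f x y ≤ ρ x y ∧ ρ x y ≤ K * f x y := by
  simp only [EmbedsL1, IsL1Distance, ← dist_eq_norm]
  constructor
  · rintro ⟨Ω, _, μ, Ψ, hΨ⟩
    exact ⟨_, ⟨Ω, _, μ, Ψ, fun _ _ => rfl⟩, hΨ⟩
  · rintro ⟨ρ, ⟨Ω, _, μ, Ψ, hΨ⟩, hρ⟩
    exact ⟨Ω, _, μ, Ψ, by simpa only [hΨ] using hρ⟩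

namespace IsL1Distance

variable {X Y : Type*} {ρ σ : X → X → ℝ}

theorem nonneg (hρ : IsL1Distance ρ) (x y : X) : 0 ≤ ρ x y := by
  obtain ⟨_, _, _, Ψ, hΨ⟩ := hρ
  exact hΨ x y ▸ dist_nonneg

theorem symm (hρ : IsL1Distance ρ) (x y : X) : ρ x y = ρ y x := by
  obtain ⟨_, _, _, Ψ, hΨ⟩ := hρ
  rw [← hΨ, ← hΨ, dist_comm]

theorem apply_self (hρ : IsL1Distance ρ) (x : X) : ρ x x = 0 := by
  obtain ⟨_, _, _, Ψ, hΨ⟩ := hρ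
  rw [← hΨ, dist_self]

theorem comp (hρ : IsL1Distance ρ) (f : Y → X) : IsL1Distance fun a b => ρ (f a) (f b) := by
  obtain ⟨Ω, _, μ, Ψ, hΨ⟩ := hρ
  exact ⟨Ω, _, μ, Ψ ∘ f, fun a b => hΨ (f a) (f b)⟩

theorem add (hρ : IsL1Distance ρ) (hσ : IsL1Distance σ) :
    IsL1Distance fun x y => ρ x y + σ x y := by
  obtain ⟨Ω, _, μ, Ψ, hΨ⟩ := hρ
  obtain ⟨Ω', _, ν, Φ, hΦ⟩ := hσ
  exact ⟨Ω ⊕ Ω', _, μ.map Sum.inl + ν.map Sum.inr,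
    fun x => (Lp.memLp_sumElim (Ψ x) (Φ x)).toLp _,
    fun x y => by rw [Lp.dist_toLp_sumElim, hΨ, hΦ]⟩

end IsL1Distance

theorem isL1Distance_abs_sub {X : Type*} (u : X → ℝ) : IsL1Distance fun x y => |u x - u y| :=
  ⟨Unit, _, Measure.dirac (), fun x => Lp.const 1 _ (u x), fun x y => by
    rw [dist_eq_norm, ← map_sub, Lp.norm_const' _ _ _ one_ne_zero ENNReal.one_ne_top]
    simp⟩

theorem IsMetric.nonneg {M : Type*} {d : M → M → ℝ} (hd : IsMetric d) (x y : M) : 0 ≤ d x y := by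
  rcases eq_or_ne x y with rfl | hxy
  · exact (hd.1 x).ge
  · exact (hd.2.1 x y hxy).le

theorem le_min_add_min_of_sub_le {a b s : ℝ} (ha : 0 ≤ a) (hb : 0 ≤ b) (hs : 0 ≤ s)
    (h : a - b ≤ s) : a ≤ min a s + min a b := by
  rcases le_total a s with has | has
  · rw [min_eq_left has]
    linarith [le_min ha hb]
  · rw [min_eq_right has]
    linarith [le_min (by linarith : a - s ≤ a) (by linarith : a - s ≤ b)]

-- Inside copy `i`: `a = d_i x y`, `b = d_(1-i) x y`, `s = r x + r y`, `t = r x - r y`, and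
-- `u`, `v` are the L¹ distances approximating `h x y` and `g_i x y`.
theorem sameSide_bounds {a b s t u v C C' L : ℝ} (ha : 0 ≤ a) (hb : 0 ≤ b) (hs : 0 ≤ s)
    (hab : |a - b| ≤ s) (hL : 0 ≤ L) (ht : |t| ≤ L * min a b) (hC : 0 ≤ C) (hC' : 0 ≤ C')
    (hu : min a b ≤ u ∧ u ≤ C' * min a b) (hv : min a s ≤ v ∧ v ≤ C * min a s) :
    a ≤ u + v + |t| ∧ u + v + |t| ≤ (C + C' + L) * a := by
  have hmin : min a b ≤ a := min_le_left a b
  constructor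
  · linarith [le_min_add_min_of_sub_le ha hb hs (abs_le.1 hab).2, abs_nonneg t]
  · linarith [mul_le_mul_of_nonneg_left hmin hC', mul_le_mul_of_nonneg_left (min_le_left a s) hC,
      mul_le_mul_of_nonneg_left hmin hL]

section TwistedUnion

variable {M : Type*} {d0 d1 : M → M → ℝ} {r : M → ℝ}

theorem twistedDist_cross_le [Finite M] (x y z : M) :
    twistedDist d0 d1 r (x, false) (y, true) ≤ d0 x z + d1 z y + r z :=
  Finite.ciInf_le _ z

theorem exists_twistedDist_cross_eq [Finite M] [Nonempty M] (x y : M) :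
    ∃ z, twistedDist d0 d1 r (x, false) (y, true) = d0 x z + d1 z y + r z :=
  exists_eq_ciInf_of_finite.imp fun _ h => h.symm

theorem twistedDist_cross_le_min_add [Finite M] (hd0 : IsMetric d0) (hd1 : IsMetric d1)
    (hr : ∀ x, 0 ≤ r x) (x y : M) :
    twistedDist d0 d1 r (x, false) (y, true) ≤ min (d0 x y) (d1 x y) + (r x + r y) := by
  rcases le_total (d0 x y) (d1 x y) with h | h
  · rw [min_eq_left h]
    linarith [twistedDist_cross_le (d0 := d0) (d1 := d1) (r := r) x y y, hd1.1 y, hr x]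
  · rw [min_eq_right h]
    linarith [twistedDist_cross_le (d0 := d0) (d1 := d1) (r := r) x y x, hd0.1 x, hr y]

theorem max_le_mul_of_abs_sub_le {L : ℝ} (hL : 0 ≤ L) (hd0 : ∀ x y, 0 ≤ d0 x y)
    (hd1 : ∀ x y, 0 ≤ d1 x y) (hr : ∀ x, 0 ≤ r x)
    (hrL : ∀ x y, |r x - r y| ≤ L * min (d0 x y) (d1 x y)) (x y z : M) :
    max (r x) (r y) ≤ (L + 1) * (d0 x z + d1 z y + r z) := by
  have hx : r x - r z ≤ L * d0 x z :=
    (le_abs_self _).trans ((hrL x z).trans (mul_le_mul_of_nonneg_left (min_le_left _ _) hL))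
  have hy : r y - r z ≤ L * d1 z y :=
    (le_abs_self _).trans ((abs_sub_comm (r y) (r z)).le.trans
      ((hrL z y).trans (mul_le_mul_of_nonneg_left (min_le_right _ _) hL)))
  refine max_le ?_ ?_ <;>
    nlinarith [mul_nonneg hL (hd0 x z), mul_nonneg hL (hd1 z y), mul_nonneg hL (hr z), hd0 x z,
      hd1 z y]

theorem min_le_add_of_abs_sub_le (hd0 : IsMetric d0)
    (hdd : ∀ x y, |d0 x y - d1 x y| ≤ r x + r y) (x y z : M) :
    min (d0 x y) (d1 x y) ≤ d0 x z + d1 z y + r z + r y :=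
  (min_le_left _ _).trans <| (hd0.2.2.2 x z y).trans <| by linarith [(abs_le.1 (hdd z y)).2]

end TwistedUnion

section TwistedL1

variable {M : Type*}

-- The mixed case `(true, false)` is the mirror image of `(false, true)`, as in `twistedDist`.
def twistedL1Dist (ρh ρ0 ρ1 : M → M → ℝ) (r : M → ℝ) (o : M) : M × Bool → M × Bool → ℝ
  | (x, false), (y, false) => ρh x y + ρ0 x y + |r x - r y|
  | (x, true),  (y, true)  => ρh x y + ρ1 x y + |r x - r y|
  | (x, false), (y, true)  => ρh x y + ρ0 x o + ρ1 o y + (|r x| + |r y|)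
  | (x, true),  (y, false) => ρh y x + ρ0 y o + ρ1 o x + (|r y| + |r x|)

theorem IsL1Distance.twistedL1Dist {ρh ρ0 ρ1 : M → M → ℝ} (hρh : IsL1Distance ρh)
    (hρ0 : IsL1Distance ρ0) (hρ1 : IsL1Distance ρ1) (r : M → ℝ) (o : M) :
    IsL1Distance (twistedL1Dist ρh ρ0 ρ1 r o) := by
  have h := ((((hρh.comp Prod.fst).add (hρ0.comp fun p => cond p.2 o p.1)).add
    (hρ1.comp fun p => cond p.2 p.1 o)).add
    (isL1Distance_abs_sub fun p => cond p.2 0 (r p.1))).add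
    (isL1Distance_abs_sub fun p => cond p.2 (r p.1) 0)
  convert h using 1
  ext ⟨x, _ | _⟩ ⟨y, _ | _⟩ <;>
    simp [_root_.twistedL1Dist, hρ0.apply_self, hρ1.apply_self, hρh.symm y x, hρ0.symm y o,
      hρ1.symm o x] <;> ring

variable {d0 d1 ρh ρ0 ρ1 : M → M → ℝ} {r : M → ℝ} {o : M} {C0 C1 C2 L : ℝ}

theorem twistedL1Dist_cross_bounds [Finite M] [Nonempty M] (hd0 : IsMetric d0)
    (hd1 : IsMetric d1) (hr : ∀ x, 0 ≤ r x) (hdd : ∀ x y, |d0 x y - d1 x y| ≤ r x + r y)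
    (hL : 0 ≤ L) (hrL : ∀ x y, |r x - r y| ≤ L * min (d0 x y) (d1 x y)) (ho : ∀ x, r o ≤ r x)
    (hC0 : 0 ≤ C0) (hC1 : 0 ≤ C1) (hC2 : 0 ≤ C2)
    (hρh : ∀ x y, min (d0 x y) (d1 x y) ≤ ρh x y ∧ ρh x y ≤ C2 * min (d0 x y) (d1 x y))
    (hρ0 : ∀ x y, min (d0 x y) (r x + r y) ≤ ρ0 x y ∧ ρ0 x y ≤ C0 * min (d0 x y) (r x + r y))
    (hρ1 : ∀ x y, min (d1 x y) (r x + r y) ≤ ρ1 x y ∧ ρ1 x y ≤ C1 * min (d1 x y) (r x + r y))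
    (x y : M) :
    twistedDist d0 d1 r (x, false) (y, true) ≤ twistedL1Dist ρh ρ0 ρ1 r o (x, false) (y, true) ∧
      twistedL1Dist ρh ρ0 ρ1 r o (x, false) (y, true) ≤
        (2 * C0 + 2 * C1 + C2 + 2) * (L + 2) * twistedDist d0 d1 r (x, false) (y, true) := by
  simp only [twistedL1Dist, abs_of_nonneg (hr _)]
  constructor
  · have h0 := (le_min (hd0.nonneg x o) (add_nonneg (hr x) (hr o))).trans (hρ0 x o).1
    have h1 := (le_min (hd1.nonneg o y) (add_nonneg (hr o) (hr y))).trans (hρ1 o y).1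
    linarith [twistedDist_cross_le_min_add hd0 hd1 hr x y, (hρh x y).1]
  obtain ⟨z, hz⟩ := exists_twistedDist_cross_eq (d0 := d0) (d1 := d1) (r := r) x y
  rw [hz]
  set s := d0 x z + d1 z y + r z
  have hs : 0 ≤ s := by linarith [hd0.nonneg x z, hd1.nonneg z y, hr z]
  have hrs := max_le_iff.1 (max_le_mul_of_abs_sub_le hL hd0.nonneg hd1.nonneg hr hrL x y z)
  have hh : min (d0 x y) (d1 x y) ≤ (L + 2) * s := by
    nlinarith [min_le_add_of_abs_sub_le hd0 hdd x y z]
  have h0 : ρ0 x o ≤ C0 * (2 * ((L + 1) * s)) :=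
    (hρ0 x o).2.trans <|
      mul_le_mul_of_nonneg_left ((min_le_right _ _).trans (by linarith [ho x])) hC0
  have h1 : ρ1 o y ≤ C1 * (2 * ((L + 1) * s)) :=
    (hρ1 o y).2.trans <|
      mul_le_mul_of_nonneg_left ((min_le_right _ _).trans (by linarith [ho y])) hC1
  have hh' := (hρh x y).2.trans (mul_le_mul_of_nonneg_left hh hC2)
  calc _ ≤ C2 * ((L + 2) * s) + C0 * (2 * ((L + 1) * s)) + C1 * (2 * ((L + 1) * s)) +
        ((L + 1) * s + (L + 1) * s) :=
        add_le_add (add_le_add (add_le_add hh' h0) h1) (add_le_add hrs.1 hrs.2)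
    _ ≤ _ := by nlinarith [mul_nonneg hC0 hs, mul_nonneg hC1 hs]

theorem twistedL1Dist_bounds [Finite M] [Nonempty M] (hd0 : IsMetric d0)
    (hd1 : IsMetric d1) (hr : ∀ x, 0 ≤ r x) (hdd : ∀ x y, |d0 x y - d1 x y| ≤ r x + r y)
    (hL : 0 ≤ L) (hrL : ∀ x y, |r x - r y| ≤ L * min (d0 x y) (d1 x y)) (ho : ∀ x, r o ≤ r x)
    (hC0 : 0 ≤ C0) (hC1 : 0 ≤ C1) (hC2 : 0 ≤ C2)
    (hρh : ∀ x y, min (d0 x y) (d1 x y) ≤ ρh x y ∧ ρh x y ≤ C2 * min (d0 x y) (d1 x y))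
    (hρ0 : ∀ x y, min (d0 x y) (r x + r y) ≤ ρ0 x y ∧ ρ0 x y ≤ C0 * min (d0 x y) (r x + r y))
    (hρ1 : ∀ x y, min (d1 x y) (r x + r y) ≤ ρ1 x y ∧ ρ1 x y ≤ C1 * min (d1 x y) (r x + r y))
    (p q : M × Bool) :
    twistedDist d0 d1 r p q ≤ twistedL1Dist ρh ρ0 ρ1 r o p q ∧
      twistedL1Dist ρh ρ0 ρ1 r o p q ≤
        (2 * C0 + 2 * C1 + C2 + 2) * (L + 2) * twistedDist d0 d1 r p q := by
  have hK0 : C0 + C2 + L ≤ (2 * C0 + 2 * C1 + C2 + 2) * (L + 2) := by nlinarith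
  have hK1 : C1 + C2 + L ≤ (2 * C0 + 2 * C1 + C2 + 2) * (L + 2) := by nlinarith
  rcases p with ⟨x, _ | _⟩ <;> rcases q with ⟨y, _ | _⟩
  · obtain ⟨lower, upper⟩ := sameSide_bounds (hd0.nonneg x y) (hd1.nonneg x y)
      (add_nonneg (hr x) (hr y)) (hdd x y) hL (hrL x y) hC0 hC2 (hρh x y) (hρ0 x y)
    exact ⟨lower, upper.trans (mul_le_mul_of_nonneg_right hK0 (hd0.nonneg x y))⟩
  · exact twistedL1Dist_cross_bounds hd0 hd1 hr hdd hL hrL ho hC0 hC1 hC2 hρh hρ0 hρ1 x y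
  · exact twistedL1Dist_cross_bounds hd0 hd1 hr hdd hL hrL ho hC0 hC1 hC2 hρh hρ0 hρ1 y x
  · obtain ⟨lower, upper⟩ := sameSide_bounds (hd1.nonneg x y) (hd0.nonneg x y)
      (add_nonneg (hr x) (hr y)) (abs_sub_comm (d0 x y) (d1 x y) ▸ hdd x y) hL
      (min_comm (d0 x y) (d1 x y) ▸ hrL x y) hC1 hC2 (min_comm (d0 x y) (d1 x y) ▸ hρh x y)
      (hρ1 x y)
    exact ⟨lower, upper.trans (mul_le_mul_of_nonneg_right hK1 (hd1.nonneg x y))⟩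

end TwistedL1

/-- Theorem 5.1: `L₁`-embeddability of generalized twisted unions when the
joining function `r` is Lipschitz with respect to both metrics. -/
theorem generalized_twisted_union_embeds_L1_lipschitz_r
    (C0 C1 C2 : ℝ) (hC0 : 1 ≤ C0) (hC1 : 1 ≤ C1) (hC2 : 1 ≤ C2)
    (L : ℝ) (hL : 0 < L) :
    ∃ D : ℝ,
      ∀ (M : Type) [Fintype M] [Nonempty M]
        (d0 d1 : M → M → ℝ) (r : M → ℝ),
        (∀ x, 0 < r x) →
        IsMetric d0 → IsMetric d1 →
        (∀ x y, |d0 x y - d1 x y| ≤ r x + r y) →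
        (∀ x y, |r x - r y| ≤ d0 x y + d1 x y) →
        (∀ x y, |r x - r y| ≤ L * min (d0 x y) (d1 x y)) →
        EmbedsL1 (fun x y => min (d0 x y) (r x + r y)) C0 →
        EmbedsL1 (fun x y => min (d1 x y) (r x + r y)) C1 →
        EmbedsL1 (fun x y => min (d0 x y) (d1 x y)) C2 →
        EmbedsL1 (twistedDist d0 d1 r) D := by
  refine ⟨(2 * C0 + 2 * C1 + C2 + 2) * (L + 2), ?_⟩
  intro M _ _ d0 d1 r hr hd0 hd1 hdd _ hrL h0 h1 hh
  obtain ⟨ρ0, hρ0, hb0⟩ := embedsL1_iff.1 h0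
  obtain ⟨ρ1, hρ1, hb1⟩ := embedsL1_iff.1 h1
  obtain ⟨ρh, hρh, hbh⟩ := embedsL1_iff.1 hh
  obtain ⟨o, ho⟩ := Finite.exists_min r
  exact embedsL1_iff.2 ⟨_, hρh.twistedL1Dist hρ0 hρ1 r o,
    twistedL1Dist_bounds hd0 hd1 (fun x => (hr x).le) hdd hL.le hrL ho (by linarith)
      (by linarith) (by linarith) hbh hb0 hb1⟩
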